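/- arXiv:2601.19058 — 2 statements merged into one kernel-verified Lean document; each statement's English description precedes it below -/
import Mathlib

section
/- Define B_5 = ⋃_{j=0}^{4} T^j([0^5]) and for m ≥ 6, B_m = L_m ∖ ⋃_{i=5}^{m-1} L_i, where L_i = ⋃_{j=0}^{i-1} T^j([0^i]) and T is the odometer on X = {0,1}^ℕ. Then for m ≥ 6, B_m is either the set T^{m-1}([0^m]) or the empty set; consequently ν(B_5) = 5/32 and ν(B_m) ∈ {0, 2^{-m}} for m ≥ 6, where ν is the Bernoulli(1/2,1/2) measure. -/
open MeasureTheory Filter Topology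
open scoped ENNReal

/-- The odometer map on `X = {0,1}^ℕ` (adding one with carry in binary). -/
def Tod (x : ℕ → Bool) : ℕ → Bool := fun k =>
  if ∀ i < k, x i = true then !(x k) else x k

/-- The inverse of the odometer map (subtracting one with borrow). -/
def TodInv (x : ℕ → Bool) : ℕ → Bool := fun k =>
  if ∀ i < k, x i = false then !(x k) else x k

/-- The number determined by the first `k` binary digits of `x`. -/
def DN (k : ℕ) (x : ℕ → Bool) : ℕ := ∑ i ∈ Finset.range k, 2 ^ i * (x i).toNat

/-- The cylinder `[0^i]` of sequences starting with `i` zeros. -/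
def cyl0 (i : ℕ) : Set (ℕ → Bool) := {x | ∀ j < i, x j = false}

/-- `A = ⋃_{i=5}^∞ ⋃_{j=0}^{i-1} T^j([0^i])`. -/
def Aset : Set (ℕ → Bool) := ⋃ (i : ℕ) (_ : 5 ≤ i) (j : ℕ) (_ : j < i), Tod^[j] '' cyl0 i

/-- `A_k = ⋃_{i=5}^{k} ⋃_{j=0}^{i-1} T^j([0^i])`. -/
def Ak (k : ℕ) : Set (ℕ → Bool) :=
  ⋃ (i : ℕ) (_ : 5 ≤ i) (_ : i ≤ k) (j : ℕ) (_ : j < i), Tod^[j] '' cyl0 i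

/-- `E_k = ⋃_{i=k+1}^∞ ⋃_{j=0}^{i-1} T^j([0^i])`. -/
def Ek (k : ℕ) : Set (ℕ → Bool) :=
  ⋃ (i : ℕ) (_ : k + 1 ≤ i) (j : ℕ) (_ : j < i), Tod^[j] '' cyl0 i

/-- `L_i = ⋃_{j=0}^{i-1} T^j([0^i])`. -/
def Lset (i : ℕ) : Set (ℕ → Bool) := ⋃ (j : ℕ) (_ : j < i), Tod^[j] '' cyl0 i

/-- `B_5 = ⋃_{j=0}^{4} T^j([0^5])` and `B_m = L_m ∖ ⋃_{i=5}^{m-1} L_i` for `m ≥ 6`. -/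
def Bset (m : ℕ) : Set (ℕ → Bool) :=
  if m = 5 then Lset 5 else Lset m \ ⋃ (i : ℕ) (_ : 5 ≤ i) (_ : i ≤ m - 1), Lset i

/-!
For `j < 2 ^ i` the map `T^j` sends `[0^i]` onto the cylinder of sequences whose first `i`
digits are the binary digits of `j` (least significant first), so `L_i` is a union of
`i`-cylinders and membership in it depends only on the first `i` coordinates. For `m ≥ 6` the
pieces `T^j [0^m]` with `j < m - 1` lie in `L_{m-1}`, hence
`B_m = T^{m-1} [0^m] \ ⋃_{5 ≤ i < m} L_i`: an `m`-cylinder minus a set determined by the first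
`m - 1` coordinates, which is the whole cylinder or nothing. The measures follow because the
`i` cylinders making up `L_i` are disjoint and each has mass `2^{-i}`.
-/

open Set Function

theorem Nat.testBit_add_one_eq_ite (j k : ℕ) :
    (j + 1).testBit k = if ∀ l < k, j.testBit l = true then !j.testBit k else j.testBit k := by
  induction k generalizing j with
  | zero =>
    simp only [Nat.not_lt_zero, IsEmpty.forall_iff, implies_true, if_true, Nat.testBit_zero]
    rcases Nat.mod_two_eq_zero_or_one j with h | h <;> simp [Nat.add_mod, h]
  | succ k ih =>
    simp only [Nat.forall_lt_succ_left, Nat.testBit_add_one]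
    rcases Nat.mod_two_eq_zero_or_one j with h | h
    · have hdiv : (j + 1) / 2 = j / 2 := by omega
      have h0 : j.testBit 0 = false := by simp [Nat.testBit_zero, h]
      simp [hdiv, h0]
    · have hdiv : (j + 1) / 2 = j / 2 + 1 := by omega
      have h0 : j.testBit 0 = true := by simp [Nat.testBit_zero, h]
      simp only [hdiv, ih, h0, true_and, Nat.testBit_div_two]

def digitCyl (i j : ℕ) : Set (ℕ → Bool) := {x | ∀ k < i, x k = j.testBit k}

theorem Tod_ite_testBit_eq_succ {i j : ℕ} (hj : j + 1 < 2 ^ i) (y : ℕ → Bool) :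
    Tod (fun k => if k < i then j.testBit k else y k) =
      fun k => if k < i then (j + 1).testBit k else y k := by
  funext k
  unfold Tod
  by_cases hk : k < i
  · have hcarry : (∀ l < k, (if l < i then j.testBit l else y l) = true) ↔
        ∀ l < k, j.testBit l = true :=
      forall₂_congr fun l hl => by rw [if_pos (hl.trans hk)]
    simp only [hk, if_true, hcarry, Nat.testBit_add_one_eq_ite]
  · have hno_carry : ¬ ∀ l < k, (if l < i then j.testBit l else y l) = true := by
      intro h
      have hcarry : ∀ l < i, j.testBit l = true := fun l hl => by
        simpa [hl] using h l (by omega)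
      -- a carry past digit `i` would make bit `i` of `j + 1` nonzero, but `j + 1 < 2 ^ i`
      have := Nat.testBit_add_one_eq_ite j i
      rw [if_pos hcarry, Nat.testBit_lt_two_pow hj, Nat.testBit_lt_two_pow (by omega)] at this
      exact Bool.false_ne_true this
    simp only [hk, if_false, hno_carry]

theorem iterate_Tod_of_mem_cyl0 {i j : ℕ} (hj : j < 2 ^ i) {y : ℕ → Bool}
    (hy : y ∈ cyl0 i) :
    Tod^[j] y = fun k => if k < i then j.testBit k else y k := by
  induction j with
  | zero =>
    funext k
    rw [iterate_zero_apply]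
    split_ifs with hk
    · rw [hy k hk, Nat.zero_testBit]
    · rfl
  | succ j ih =>
    rw [iterate_succ_apply', ih (by omega), Tod_ite_testBit_eq_succ hj]

theorem image_iterate_Tod_cyl0 {i j : ℕ} (hj : j < 2 ^ i) : Tod^[j] '' cyl0 i = digitCyl i j := by
  ext x
  constructor
  · rintro ⟨y, hy, rfl⟩ k hk
    simp [iterate_Tod_of_mem_cyl0 hj hy, hk]
  · intro hx
    refine ⟨fun k => if k < i then false else x k, fun k hk => if_pos hk, ?_⟩
    rw [iterate_Tod_of_mem_cyl0 hj fun k hk => if_pos hk]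
    funext k
    split_ifs with hk
    · exact (hx k hk).symm
    · rfl

theorem Lset_eq_iUnion_digitCyl (i : ℕ) : Lset i = ⋃ j < i, digitCyl i j :=
  iUnion₂_congr fun _ hj => image_iterate_Tod_cyl0 (hj.trans Nat.lt_two_pow_self)

theorem dependsOn_mem_Lset (i : ℕ) : DependsOn (· ∈ Lset i) (Iio i) := by
  intro x y hxy
  simp only [Lset_eq_iUnion_digitCyl, mem_iUnion₂, digitCyl]
  exact propext <| exists₂_congr fun j _ => forall₂_congr fun k hk => by rw [hxy k hk]

theorem Lset_succ_subset (n : ℕ) : Lset (n + 1) ⊆ Lset n ∪ Tod^[n] '' cyl0 (n + 1) := by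
  refine iUnion₂_subset fun j hj => ?_
  rcases Nat.lt_succ_iff_lt_or_eq.mp hj with hj | rfl
  · have hcyl : cyl0 (n + 1) ⊆ cyl0 n := fun x hx k hk => hx k (hk.trans n.lt_succ_self)
    exact fun x hx => Or.inl <| mem_iUnion₂.mpr ⟨j, hj, image_mono hcyl hx⟩
  · exact subset_union_right

theorem diff_eq_self_or_eq_empty_of_dependsOn {ι : Type*} {α : ι → Type*} {s : Set ι}
    {A U : Set (Π i, α i)} (hA : ∀ x ∈ A, ∀ y ∈ A, ∀ k ∈ s, x k = y k)
    (hU : DependsOn (· ∈ U) s) : A \ U = A ∨ A \ U = ∅ := by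
  by_cases h : ∃ x ∈ A, x ∉ U
  · obtain ⟨x, hxA, hxU⟩ := h
    left
    refine sdiff_eq_left.mpr <| disjoint_left.mpr fun y hyA hyU => hxU ?_
    exact (hU (hA x hxA y hyA)).mpr hyU
  · right
    push Not at h
    exact sdiff_eq_empty.mpr h

theorem Bset_eq_diff {m : ℕ} (hm : 6 ≤ m) :
    Bset m = Tod^[m - 1] '' cyl0 m \ ⋃ (i : ℕ) (_ : 5 ≤ i) (_ : i ≤ m - 1), Lset i := by
  obtain ⟨n, rfl⟩ : ∃ n, m = n + 1 := ⟨m - 1, by omega⟩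
  have hLU : Lset n ⊆ ⋃ (i : ℕ) (_ : 5 ≤ i) (_ : i ≤ n + 1 - 1), Lset i :=
    subset_iUnion₂_of_subset n (by omega) (subset_iUnion_of_subset (by omega) subset_rfl)
  rw [Bset, if_neg (by omega), Nat.add_sub_cancel]
  ext x
  constructor
  · rintro ⟨hxL, hxU⟩
    exact ⟨(Lset_succ_subset n hxL).resolve_left fun h => hxU (hLU h), hxU⟩
  · rintro ⟨hxA, hxU⟩
    exact ⟨mem_iUnion₂.mpr ⟨n, n.lt_succ_self, hxA⟩, hxU⟩

theorem Bset_eq_or_eq_empty {m : ℕ} (hm : 6 ≤ m) :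
    Bset m = Tod^[m - 1] '' cyl0 m ∨ Bset m = ∅ := by
  rw [Bset_eq_diff hm]
  refine diff_eq_self_or_eq_empty_of_dependsOn (s := Iio m) ?_ ?_
  · rw [image_iterate_Tod_cyl0 (by have := m.lt_two_pow_self; omega)]
    exact fun x hx y hy k hk => (hx k hk).trans (hy k hk).symm
  · intro x y hxy
    simp only [mem_iUnion]
    exact propext <| exists_congr fun i => exists_congr fun _ => exists_congr fun hi =>
      Eq.to_iff <| dependsOn_mem_Lset i fun k hk => hxy k (by grind)

theorem measurableSet_digitCyl (i j : ℕ) : MeasurableSet (digitCyl i j) := by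
  simp only [digitCyl, ofPred_forall]
  exact .iInter fun k => .iInter fun _ =>
    measurableSet_eq_fun (measurable_pi_apply k) measurable_const

theorem disjoint_digitCyl {i j j' : ℕ} (hj : j < 2 ^ i) (hj' : j' < 2 ^ i) (hne : j ≠ j') :
    Disjoint (digitCyl i j) (digitCyl i j') := by
  refine disjoint_left.mpr fun x hx hx' => hne ?_
  rw [← Nat.mod_eq_of_lt hj, ← Nat.mod_eq_of_lt hj']
  refine Nat.eq_of_testBit_eq fun k => ?_
  simp only [Nat.testBit_mod_two_pow]
  by_cases hk : k < i
  · simp [hk, ← hx k hk, hx' k hk]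
  · simp [hk]

theorem measure_Lset {ν : Measure (ℕ → Bool)}
    (hν : ∀ (n : ℕ) (a : ℕ → Bool), ν {x | ∀ i < n, x i = a i} = (2 : ℝ≥0∞)⁻¹ ^ n) (i : ℕ) :
    ν (Lset i) = i * (2 : ℝ≥0∞)⁻¹ ^ i := by
  have hdisj : PairwiseDisjoint (↑(Finset.range i)) (digitCyl i) := fun j hj j' hj' hne =>
    disjoint_digitCyl (lt_of_lt_of_le (Finset.mem_range.mp hj) i.lt_two_pow_self.le)
      (lt_of_lt_of_le (Finset.mem_range.mp hj') i.lt_two_pow_self.le) hne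
  have hunion : ⋃ j < i, digitCyl i j = ⋃ j ∈ Finset.range i, digitCyl i j := by
    simp only [Finset.mem_range]
  rw [Lset_eq_iUnion_digitCyl, hunion,
    measure_biUnion_finset hdisj fun j _ => measurableSet_digitCyl i j]
  simp only [digitCyl, hν, Finset.sum_const, Finset.card_range, nsmul_eq_mul]

/-- for `m ≥ 6`, `B_m` is either `T^{m-1}([0^m])` or empty; consequently
`ν(B_5) = 5/32` and `ν(B_m) ∈ {0, 2^{-m}}` for `m ≥ 6`. -/
theorem stmt4 (ν : Measure (ℕ → Bool))
    (hν : ∀ (n : ℕ) (a : ℕ → Bool), ν {x | ∀ i < n, x i = a i} = (2 : ℝ≥0∞)⁻¹ ^ n) :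
    (∀ m, 6 ≤ m → Bset m = Tod^[m - 1] '' cyl0 m ∨ Bset m = ∅) ∧
    ν (Bset 5) = 5 / 32 ∧
    ∀ m, 6 ≤ m → ν (Bset m) = 0 ∨ ν (Bset m) = (2 : ℝ≥0∞)⁻¹ ^ m := by
  refine ⟨fun m => Bset_eq_or_eq_empty, ?_, fun m hm => ?_⟩
  · rw [Bset, if_pos rfl, measure_Lset hν, ← ENNReal.inv_pow, div_eq_mul_inv]
    norm_num
  · rcases Bset_eq_or_eq_empty hm with h | h
    · rw [h, image_iterate_Tod_cyl0 (by have := m.lt_two_pow_self; omega)]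
      exact Or.inr (hν m _)
    · exact Or.inl (h ▸ measure_empty)
end

section
/- Let x ∈ X satisfy κ(x) = s_0 for some s_0 ≥ 5, where κ counts leading zeros, and T^{-1}(x) ∉ A. Define n_0 = 0, s_p = κ(T^{n_p}(x)) and n_{p+1} = n_p + 2^{s_p}. Then s_{p+1} ≥ s_p + 1 for all p, and T^i(x) ∉ [0^{s_p + 1}] for all n_p ≤ i < n_{p+1}. -/
open MeasureTheory Filter Topology
open scoped ENNReal

lemma sum_pow_two (k : ℕ) : ∑ i ∈ Finset.range k, 2 ^ i = 2 ^ k - 1 := by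
  induction k with
  | zero => simp
  | succ k ih =>
    rw [Finset.sum_range_succ, ih]
    have : 1 ≤ 2 ^ k := Nat.one_le_two_pow
    omega

lemma DN_lt (k : ℕ) (y : ℕ → Bool) : DN k y < 2 ^ k := by
  induction k with
  | zero => simp [DN]
  | succ k ih =>
    unfold DN at *
    rw [Finset.sum_range_succ]
    have : 2 ^ k * (y k).toNat ≤ 2 ^ k := by cases y k <;> simp
    have h2 : 2 ^ (k + 1) = 2 ^ k + 2 ^ k := by ring
    omega

lemma DN_eq_zero_iff (k : ℕ) (y : ℕ → Bool) : DN k y = 0 ↔ ∀ j < k, y j = false := by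
  unfold DN
  rw [Finset.sum_eq_zero_iff]
  constructor
  · intro h j hj
    have := h j (Finset.mem_range.mpr hj)
    cases hy : y j
    · rfl
    · simp [hy] at this
  · intro h i hi
    simp [h i (Finset.mem_range.mp hi)]

lemma DN_Tod (k : ℕ) (y : ℕ → Bool) : DN k (Tod y) = (DN k y + 1) % 2 ^ k := by
  by_cases h : ∀ i < k, y i = true
  · have h1 : DN k (Tod y) = 0 := by
      rw [DN_eq_zero_iff]
      intro j hj
      have : Tod y j = !(y j) := by
        unfold Tod
        rw [if_pos (fun i hi => h i (hi.trans hj))]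
      rw [this, h j hj]
      rfl
    have h2 : DN k y = 2 ^ k - 1 := by
      unfold DN
      rw [← sum_pow_two k]
      exact Finset.sum_congr rfl (fun i hi => by simp [h i (Finset.mem_range.mp hi)])
    have : 1 ≤ 2 ^ k := Nat.one_le_two_pow
    rw [h1, h2]
    have : 2 ^ k - 1 + 1 = 2 ^ k := by omega
    rw [this, Nat.mod_self]
  · push_neg at h
    obtain ⟨j0, hj0k, hj0⟩ := h
    replace hj0 : y j0 = false := by simpa using hj0
    have hex : ∃ i, y i = false := ⟨j0, hj0⟩
    set j := Nat.find hex with hj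
    have hjf : y j = false := Nat.find_spec hex
    have hjmin : ∀ i < j, y i = true := by
      intro i hi
      have := Nat.find_min hex hi
      cases hy : y i
      · exact absurd hy this
      · rfl
    have hjk : j < k := by
      by_contra hc
      push_neg at hc
      exact absurd (Nat.find_min' hex hj0 : j ≤ j0) (by omega)
    have hTj : ∀ i < j, Tod y i = false := by
      intro i hi
      unfold Tod
      rw [if_pos (fun i' hi' => hjmin i' (hi'.trans hi)), hjmin i hi]
      rfl
    have hTjj : Tod y j = true := by
      unfold Tod
      rw [if_pos hjmin, hjf]
      rfl
    have hTgt : ∀ i, j < i → Tod y i = y i := by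
      intro i hi
      unfold Tod
      rw [if_neg]
      push_neg
      exact ⟨j, hi, by rw [hjf]; simp⟩
    have key : DN k (Tod y) = DN k y + 1 := by
      unfold DN
      have hsplit : ∀ z : ℕ → Bool, ∑ i ∈ Finset.range k, 2 ^ i * (z i).toNat =
          (∑ i ∈ Finset.range (j+1), 2 ^ i * (z i).toNat) +
          ∑ i ∈ Finset.Ico (j+1) k, 2 ^ i * (z i).toNat := by
        intro z
        rw [Finset.range_eq_Ico, Finset.range_eq_Ico]
        exact (Finset.sum_Ico_consecutive (fun i => 2 ^ i * (z i).toNat) (Nat.zero_le (j+1)) (show j + 1 ≤ k by omega)).symm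
      rw [hsplit (Tod y), hsplit y]
      have h1 : ∑ i ∈ Finset.Ico (j+1) k, 2 ^ i * ((Tod y) i).toNat =
          ∑ i ∈ Finset.Ico (j+1) k, 2 ^ i * (y i).toNat := by
        refine Finset.sum_congr rfl (fun i hi => ?_)
        rw [hTgt i (by simpa using (Finset.mem_Ico.mp hi).1)]
      have h2 : ∑ i ∈ Finset.range (j+1), 2 ^ i * ((Tod y) i).toNat = 2 ^ j := by
        rw [Finset.sum_range_succ, hTjj]
        have : ∑ i ∈ Finset.range j, 2 ^ i * ((Tod y) i).toNat = 0 := by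
          refine Finset.sum_eq_zero (fun i hi => ?_)
          rw [hTj i (Finset.mem_range.mp hi)]; simp
        rw [this]; simp
      have h3 : ∑ i ∈ Finset.range (j+1), 2 ^ i * (y i).toNat = 2 ^ j - 1 := by
        rw [Finset.sum_range_succ, hjf]
        have : ∑ i ∈ Finset.range j, 2 ^ i * (y i).toNat = ∑ i ∈ Finset.range j, 2 ^ i := by
          refine Finset.sum_congr rfl (fun i hi => ?_)
          rw [hjmin i (Finset.mem_range.mp hi)]; simp
        rw [this, sum_pow_two]; simp
      rw [h1, h2, h3]
      have : 1 ≤ 2 ^ j := Nat.one_le_two_pow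
      omega
    rw [key, Nat.mod_eq_of_lt (key ▸ DN_lt k (Tod y))]

lemma DN_iter (k m : ℕ) (y : ℕ → Bool) : DN k (Tod^[m] y) = (DN k y + m) % 2 ^ k := by
  induction m with
  | zero => simp [Nat.mod_eq_of_lt (DN_lt k y)]
  | succ m ih =>
    rw [Function.iterate_succ_apply', DN_Tod, ih, Nat.mod_add_mod, add_assoc]

/-- with `κ(x) = s_0 ≥ 5`, `T^{-1}(x) ∉ A`, `n_0 = 0`,
`s_p = κ(T^{n_p}(x))`, `n_{p+1} = n_p + 2^{s_p}`, one has `s_{p+1} ≥ s_p + 1` and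
`T^i(x) ∉ [0^{s_p+1}]` for `n_p ≤ i < n_{p+1}`. -/
theorem stmt6 (x : ℕ → Bool)
    (hpre : ∀ y, Tod y = x → y ∉ Aset)
    (hnz : ∀ m, Tod^[m] x ≠ fun _ => false)
    (s nn : ℕ → ℕ)
    (hn0 : nn 0 = 0)
    (hs0 : 5 ≤ s 0)
    (hκ : ∀ p, (∀ i < s p, Tod^[nn p] x i = false) ∧ Tod^[nn p] x (s p) = true)
    (hrec : ∀ p, nn (p + 1) = nn p + 2 ^ s p) :
    (∀ p, s p + 1 ≤ s (p + 1)) ∧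
    ∀ p i, nn p ≤ i → i < nn (p + 1) → Tod^[i] x ∉ cyl0 (s p + 1) := by
  have hDN : ∀ p, DN (s p + 1) (Tod^[nn p] x) = 2 ^ s p := by
    intro p
    obtain ⟨h1, h2⟩ := hκ p
    unfold DN
    rw [Finset.sum_range_succ, h2]
    have hz : ∑ i ∈ Finset.range (s p), 2 ^ i * ((Tod^[nn p] x) i).toNat = 0 :=
      Finset.sum_eq_zero (fun i hi => by rw [h1 i (Finset.mem_range.mp hi)]; simp)
    rw [hz]; simp
  constructor
  · intro p
    by_contra hc
    push_neg at hc
    have e : Tod^[nn (p + 1)] x = Tod^[2 ^ s p] (Tod^[nn p] x) := by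
      rw [hrec p, Nat.add_comm, Function.iterate_add_apply]
    have h0 : DN (s p + 1) (Tod^[nn (p + 1)] x) = 0 := by
      rw [e, DN_iter, hDN]
      have h2 : 2 ^ s p + 2 ^ s p = 2 ^ (s p + 1) := by ring
      rw [h2, Nat.mod_self]
    have hf := (DN_eq_zero_iff _ _).mp h0 (s (p + 1)) (by omega)
    rw [(hκ (p + 1)).2] at hf
    exact Bool.noConfusion hf
  · intro p i hle hlt hcyl
    obtain ⟨j, rfl⟩ : ∃ j, i = nn p + j := ⟨i - nn p, by omega⟩
    have hj : j < 2 ^ s p := by rw [hrec p] at hlt; omega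
    have e : Tod^[nn p + j] x = Tod^[j] (Tod^[nn p] x) := by
      rw [Nat.add_comm, Function.iterate_add_apply]
    have hv : DN (s p + 1) (Tod^[nn p + j] x) = 2 ^ s p + j := by
      rw [e, DN_iter, hDN]
      refine Nat.mod_eq_of_lt ?_
      have h2 : 2 ^ (s p + 1) = 2 ^ s p + 2 ^ s p := by ring
      omega
    have h0 : DN (s p + 1) (Tod^[nn p + j] x) = 0 := (DN_eq_zero_iff _ _).mpr hcyl
    have := Nat.one_le_two_pow (n := s p)
    omega
end
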